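/- arXiv:2201.01285 — 7 statements merged into one kernel-verified Lean document; each statement's English description precedes it below -/
import Mathlib

section
/- Let $T$ be a string of length $n$ over an ordered alphabet whose last character $T[n]$ is a sentinel $\$$ that is strictly smaller than all other characters and occurs only at position $n$. Let $T^\infty$ denote the infinite periodic extension of $T$. For positions $j, j' \in [1..n]$ and integers $0 \le \ell_1 < \ell_2 \le \ell_3$: the suffix $T[j'..n]$ is lexicographically smaller than $T[j..n]$ and the length of the longest common prefix of $T[j..n]$ and $T[j'..n]$ lies in $[\ell_1, \ell_2)$ if and only if $T^\infty[j..j+\ell_1) \preceq T^\infty[j'..j'+\ell_3) \prec T^\infty[j..j+\ell_2)$ in lexicographic order. -/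
/-- Length of the longest common prefix of two lists. -/
def lcpLen {α : Type*} [DecidableEq α] : List α → List α → ℕ
  | a :: s, b :: t => if a = b then lcpLen s t + 1 else 0
  | _, _ => 0

/-- The fragment `T[a..a+len)` of a (1-indexed) text `T : ℕ → α`. -/
def frag {α : Type*} (T : ℕ → α) (a len : ℕ) : List α :=
  (List.range len).map (fun t => T (a + t))

/-- The suffix `T[j..n]` of a text of length `n`. -/
def suff {α : Type*} (T : ℕ → α) (n j : ℕ) : List α := frag T j (n + 1 - j)

/-- The fragment `T^∞[j..j+ℓ)` of the infinite periodic extension of `T[1..n]`. -/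
def tinf {α : Type*} (T : ℕ → α) (n j ℓ : ℕ) : List α :=
  (List.range ℓ).map (fun t => T ((j + t - 1) % n + 1))

/-- `p` is a period of the list `X`. -/
def hasPer {α : Type*} (X : List α) (p : ℕ) : Prop :=
  ∀ i, i + p < X.length → X[i]? = X[i + p]?

/-- The shortest period of a list. -/
noncomputable def per {α : Type*} (X : List α) : ℕ := sInf {p | 1 ≤ p ∧ hasPer X p}

/-- `runEnd S n i p` is the maximal `e ≤ n+1` such that `S[i..e)` has period `p`,
i.e. `S[i..runEnd S n i p)` is the longest prefix of `S[i..n]` with period `p`. -/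
noncomputable def runEnd {α : Type*} (S : ℕ → α) (n i p : ℕ) : ℕ :=
  sSup {e | i ≤ e ∧ e ≤ n + 1 ∧ ∀ t, i ≤ t → t + p < e → S t = S (t + p)}

section AuxLemmas

variable {α : Type*} [LinearOrder α]

lemma lcpLen_cons_self (a : α) (s t : List α) :
    lcpLen (a :: s) (a :: t) = lcpLen s t + 1 := by simp [lcpLen]

lemma lcpLen_le_left : ∀ (s t : List α), lcpLen s t ≤ s.length
  | [], t => by simp [lcpLen]
  | a :: s, [] => by simp [lcpLen]
  | a :: s, b :: t => by
    by_cases hab : a = b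
    · subst hab; rw [lcpLen_cons_self]
      simpa using lcpLen_le_left s t
    · simp [lcpLen, hab]

lemma lcpLen_le_right : ∀ (s t : List α), lcpLen s t ≤ t.length
  | [], t => by simp [lcpLen]
  | a :: s, [] => by simp [lcpLen]
  | a :: s, b :: t => by
    by_cases hab : a = b
    · subst hab; rw [lcpLen_cons_self]
      simpa using lcpLen_le_right s t
    · simp [lcpLen, hab]

lemma lcpLen_agree : ∀ (s t : List α) (i : ℕ), i < lcpLen s t → s[i]? = t[i]?
  | [], t, i, h => by simp [lcpLen] at h
  | a :: s, [], i, h => by simp [lcpLen] at h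
  | a :: s, b :: t, i, h => by
    by_cases hab : a = b
    · subst hab
      cases i with
      | zero => simp
      | succ i =>
        rw [lcpLen_cons_self] at h
        simpa using lcpLen_agree s t i (by omega)
    · simp [lcpLen, hab] at h

lemma le_lcpLen : ∀ (s t : List α) (m : ℕ), m ≤ s.length → m ≤ t.length →
    (∀ i, i < m → s[i]? = t[i]?) → m ≤ lcpLen s t
  | _, _, 0, _, _, _ => Nat.zero_le _
  | [], _, m + 1, hs, _, _ => by simp at hs
  | _ :: _, [], m + 1, _, ht, _ => by simp at ht
  | a :: s, b :: t, m + 1, hs, ht, h => by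
    have h0 := h 0 (Nat.succ_pos _)
    simp only [List.getElem?_cons_zero, Option.some.injEq] at h0
    subst h0
    rw [lcpLen_cons_self]
    have := le_lcpLen s t m (by simpa using hs) (by simpa using ht)
      (fun i hi => by simpa using h (i + 1) (by omega))
    omega

lemma lcpLen_le_of_ne : ∀ (s t : List α) (m : ℕ), s[m]? ≠ t[m]? → lcpLen s t ≤ m
  | [], t, m, _ => by cases t <;> simp [lcpLen]
  | a :: s, [], m, _ => by simp [lcpLen]
  | a :: s, b :: t, m, h => by
    by_cases hab : a = b
    · subst hab
      cases m with
      | zero => simp at h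
      | succ m =>
        rw [lcpLen_cons_self]
        have := lcpLen_le_of_ne s t m (by simpa using h)
        omega
    · simp [lcpLen, hab]

lemma getElem?_some_lt_length {s : List α} {m : ℕ} {a : α} (h : s[m]? = some a) :
    m < s.length := by
  by_contra hc; push_neg at hc; rw [List.getElem?_eq_none hc] at h; cases h

lemma lt_of_mismatch : ∀ (m : ℕ) (s t : List α) (a b : α),
    (∀ i, i < m → s[i]? = t[i]?) → s[m]? = some a → t[m]? = some b → a < b → s < t
  | _, [], _, a, b, _, hs, _, _ => by simp at hs
  | _, _ :: _, [], a, b, _, _, ht, _ => by simp at ht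
  | 0, c :: s, d :: t, a, b, _, hs, ht, hab => by
    simp only [List.getElem?_cons_zero, Option.some.injEq] at hs ht
    subst hs; subst ht
    exact List.Lex.rel hab
  | m + 1, c :: s, d :: t, a, b, hag, hs, ht, hab => by
    have h0 := hag 0 (Nat.succ_pos _)
    simp only [List.getElem?_cons_zero, Option.some.injEq] at h0
    subst h0
    exact List.Lex.cons (lt_of_mismatch m s t a b
      (fun i hi => by simpa using hag (i + 1) (by omega))
      (by simpa using hs) (by simpa using ht) hab)

lemma lt_of_proper_prefix : ∀ (s t : List α),
    (∀ i, i < s.length → s[i]? = t[i]?) → s.length < t.length → s < t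
  | [], [], _, hlen => by simp at hlen
  | [], b :: t, _, _ => List.Lex.nil
  | a :: s, [], _, hlen => by simp at hlen
  | a :: s, b :: t, h, hlen => by
    have h0 := h 0 (Nat.succ_pos _)
    simp only [List.getElem?_cons_zero, Option.some.injEq] at h0
    subst h0
    exact List.Lex.cons (lt_of_proper_prefix s t
      (fun i hi => by simpa using h (i + 1) (by simpa using hi))
      (by simpa using hlen))

lemma lt_elim {s t : List α} (h : s < t) :
    (s.length < t.length ∧ ∀ i, i < s.length → s[i]? = t[i]?) ∨
    ∃ (m : ℕ) (a b : α), (∀ i, i < m → s[i]? = t[i]?) ∧ s[m]? = some a ∧ t[m]? = some b ∧ a < b := by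
  have h' : List.Lex (· < ·) s t := h
  clear h
  induction h' with
  | nil => exact Or.inl ⟨by simp, by simp⟩
  | @rel a l b l' hab => exact Or.inr ⟨0, a, b, by simp, by simp, by simp, hab⟩
  | @cons a l l' h ih =>
    rcases ih with ⟨h1, h2⟩ | ⟨m, x, y, hag, hx, hy, hxy⟩
    · refine Or.inl ⟨by simpa using h1, ?_⟩
      rintro (_ | i) hi
      · simp
      · simpa using h2 i (by simpa using hi)
    · refine Or.inr ⟨m + 1, x, y, ?_, by simpa using hx, by simpa using hy, hxy⟩
      rintro (_ | i) hi
      · simp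
      · simpa using hag i (by omega)

lemma frag_getElem? (T : ℕ → α) (a len t : ℕ) (ht : t < len) :
    (frag T a len)[t]? = some (T (a + t)) := by simp [frag, ht]

lemma frag_length (T : ℕ → α) (a len : ℕ) : (frag T a len).length = len := by simp [frag]

lemma suff_getElem? (T : ℕ → α) (n j t : ℕ) (ht : t < n + 1 - j) :
    (suff T n j)[t]? = some (T (j + t)) := by
  rw [suff]; exact frag_getElem? T j (n + 1 - j) t ht

lemma suff_length (T : ℕ → α) (n j : ℕ) : (suff T n j).length = n + 1 - j := by
  rw [suff]; exact frag_length T j (n + 1 - j)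

lemma tinf_getElem? (T : ℕ → α) (n j ℓ t : ℕ) (ht : t < ℓ) :
    (tinf T n j ℓ)[t]? = some (T ((j + t - 1) % n + 1)) := by simp [tinf, ht]

lemma tinf_length (T : ℕ → α) (n j ℓ : ℕ) : (tinf T n j ℓ).length = ℓ := by simp [tinf]

lemma fmod {n j t : ℕ} (hj : 1 ≤ j) (h : j + t ≤ n) : (j + t - 1) % n + 1 = j + t := by
  rw [Nat.mod_eq_of_lt (by omega)]; omega

/-- If the infinite extensions starting at two distinct positions agree for `m` characters,
then `m` cannot reach the sentinel position of the first, i.e. `m ≤ n - j`. -/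
lemma no_wrap {T : ℕ → α} {n : ℕ} (hn : 1 ≤ n)
    (hsent : ∀ i, 1 ≤ i → i < n → T n < T i)
    {j j' : ℕ} (hj : 1 ≤ j) (hjn : j ≤ n) (hj' : 1 ≤ j') (hj'n : j' ≤ n) (hne : j ≠ j')
    {m : ℕ} (hag : ∀ t, t < m → T ((j + t - 1) % n + 1) = T ((j' + t - 1) % n + 1)) :
    m ≤ n - j := by
  by_contra h
  push_neg at h
  have hteq := hag (n - j) h
  have h1 : j + (n - j) - 1 = n - 1 := by omega
  rw [h1, Nat.mod_eq_of_lt (show n - 1 < n by omega)] at hteq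
  have h3 : n - 1 + 1 = n := by omega
  rw [h3] at hteq
  have hdlt : (j' + (n - j) - 1) % n < n := Nat.mod_lt _ (by omega)
  rcases Nat.lt_or_ge ((j' + (n - j) - 1) % n + 1) n with hl | hge
  · have hx := hsent _ (Nat.le_add_left 1 _) hl
    rw [← hteq] at hx
    exact lt_irrefl _ hx
  · have hmod : (j' + (n - j) - 1) % n = n - 1 := by omega
    rcases Nat.lt_or_ge (j' + (n - j) - 1) n with ha | hb
    · rw [Nat.mod_eq_of_lt ha] at hmod; omega
    · rw [Nat.mod_eq_sub_mod hb, Nat.mod_eq_of_lt (by omega)] at hmod; omega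

end AuxLemmas

/-- Lemma `lm:utils`(1): for a text `T[1..n]` ending with a unique minimal sentinel and
`0 ≤ ℓ1 < ℓ2 ≤ ℓ3`:  `T[j'..n] ≺ T[j..n]` and `LCE_T(j,j') ∈ [ℓ1..ℓ2)` iff
`T^∞[j..j+ℓ1) ⪯ T^∞[j'..j'+ℓ3) ≺ T^∞[j..j+ℓ2)`. -/
theorem lex_lce_window_iff {α : Type*} [LinearOrder α] (T : ℕ → α) (n : ℕ) (hn : 1 ≤ n)
    (hsent : ∀ i, 1 ≤ i → i < n → T n < T i)
    (j j' ℓ1 ℓ2 ℓ3 : ℕ) (hj : 1 ≤ j) (hjn : j ≤ n) (hj' : 1 ≤ j') (hj'n : j' ≤ n)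
    (h12 : ℓ1 < ℓ2) (h23 : ℓ2 ≤ ℓ3) :
    (suff T n j' < suff T n j ∧ ℓ1 ≤ lcpLen (suff T n j) (suff T n j') ∧
        lcpLen (suff T n j) (suff T n j') < ℓ2) ↔
      (tinf T n j ℓ1 ≤ tinf T n j' ℓ3 ∧ tinf T n j' ℓ3 < tinf T n j ℓ2) := by
  classical
  by_cases hjj : j = j'
  · subst hjj
    constructor
    · rintro ⟨hlt, -⟩
      exact absurd hlt (lt_irrefl _)
    · rintro ⟨-, hlt⟩
      exfalso
      rcases lt_elim hlt with ⟨hlen, -⟩ | ⟨m, a, b, hag, ha, hb, hab⟩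
      · rw [tinf_length, tinf_length] at hlen; omega
      · have hm3 : m < ℓ3 := by have := getElem?_some_lt_length ha; rwa [tinf_length] at this
        have hm2 : m < ℓ2 := by have := getElem?_some_lt_length hb; rwa [tinf_length] at this
        rw [tinf_getElem? T n j ℓ3 m hm3] at ha
        rw [tinf_getElem? T n j ℓ2 m hm2] at hb
        rw [Option.some.injEq] at ha hb
        subst ha; subst hb
        exact lt_irrefl _ hab
  · -- j ≠ j'
    set L := lcpLen (suff T n j) (suff T n j') with hLdef
    have hlenj : (suff T n j).length = n + 1 - j := suff_length T n j
    have hlenj' : (suff T n j').length = n + 1 - j' := suff_length T n j'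
    have hLlenj : L ≤ n + 1 - j := by
      have := lcpLen_le_left (suff T n j) (suff T n j'); omega
    have hLlenj' : L ≤ n + 1 - j' := by
      have := lcpLen_le_right (suff T n j) (suff T n j'); omega
    have hagree : ∀ t, t < L → T (j + t) = T (j' + t) := by
      intro t ht
      have := lcpLen_agree (suff T n j) (suff T n j') t ht
      rw [suff_getElem? T n j t (by omega), suff_getElem? T n j' t (by omega)] at this
      simpa using this
    have hagf : ∀ t, t < L → T ((j + t - 1) % n + 1) = T ((j' + t - 1) % n + 1) := by
      intro t ht
      rw [fmod hj (by omega), fmod hj' (by omega)]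
      exact hagree t ht
    have hL1 : L ≤ n - j := no_wrap hn hsent hj hjn hj' hj'n hjj hagf
    have hL2 : L ≤ n - j' :=
      no_wrap hn hsent hj' hj'n hj hjn (Ne.symm hjj) (fun t ht => (hagf t ht).symm)
    have hmis : T (j + L) ≠ T (j' + L) := by
      intro he
      have hle := le_lcpLen (suff T n j) (suff T n j') (L + 1) (by omega) (by omega)
        (fun i hi => by
          rw [suff_getElem? T n j i (by omega), suff_getElem? T n j' i (by omega)]
          rcases Nat.lt_or_ge i L with h' | h'
          · exact congrArg some (hagree i h')
          · have : i = L := by omega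
            subst this; exact congrArg some he)
      omega
    -- key: any mismatch witness between the two suffixes occurs exactly at L
    have key : ∀ m a b, (∀ i, i < m → (suff T n j')[i]? = (suff T n j)[i]?) →
        (suff T n j')[m]? = some a → (suff T n j)[m]? = some b → a ≠ b →
        m = L ∧ a = T (j' + m) ∧ b = T (j + m) := by
      intro m a b hag ha hb hab
      have hma : m < n + 1 - j' := by have := getElem?_some_lt_length ha; omega
      have hmb : m < n + 1 - j := by have := getElem?_some_lt_length hb; omega
      rw [suff_getElem? T n j' m hma] at ha
      rw [suff_getElem? T n j m hmb] at hb
      rw [Option.some.injEq] at ha hb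
      have hmle : m ≤ L := le_lcpLen _ _ m (by omega) (by omega)
        (fun i hi => (hag i hi).symm)
      have hLm : L ≤ m := lcpLen_le_of_ne _ _ m (by
        rw [suff_getElem? T n j m hmb, suff_getElem? T n j' m hma]
        simp only [ne_eq, Option.some.injEq]
        rw [hb, ha]; exact fun h => hab h.symm)
      exact ⟨by omega, ha.symm, hb.symm⟩
    have hsufflt : suff T n j' < suff T n j → T (j' + L) < T (j + L) := by
      intro hlt
      rcases lt_elim hlt with ⟨hlen, hpref⟩ | ⟨m, a, b, hag, ha, hb, hab⟩
      · exfalso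
        have := hpref L (by omega)
        rw [suff_getElem? T n j' L (by omega), suff_getElem? T n j L (by omega)] at this
        exact hmis (by simpa using this.symm)
      · obtain ⟨hm, ha', hb'⟩ := key m a b hag ha hb (ne_of_lt hab)
        subst hm; rw [ha', hb'] at hab; exact hab
    constructor
    · rintro ⟨hlt, hl1L, hLl2⟩
      have hlt' : T (j' + L) < T (j + L) := hsufflt hlt
      constructor
      · refine le_of_lt (lt_of_proper_prefix _ _ ?_ ?_)
        · intro i hi
          rw [tinf_length] at hi
          rw [tinf_getElem? T n j ℓ1 i hi, tinf_getElem? T n j' ℓ3 i (by omega)]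
          exact congrArg some (hagf i (by omega))
        · rw [tinf_length, tinf_length]; omega
      · refine lt_of_mismatch L _ _ (T (j' + L)) (T (j + L)) ?_ ?_ ?_ hlt'
        · intro i hi
          rw [tinf_getElem? T n j' ℓ3 i (by omega), tinf_getElem? T n j ℓ2 i (by omega)]
          exact congrArg some (hagf i hi).symm
        · rw [tinf_getElem? T n j' ℓ3 L (by omega)]
          rw [fmod hj' (by omega)]
        · rw [tinf_getElem? T n j ℓ2 L (by omega)]
          rw [fmod hj (by omega)]
    · rintro ⟨hle, hlt⟩
      rcases lt_elim hlt with ⟨hlen, -⟩ | ⟨m, a, b, hag3, ha, hb, hab⟩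
      · rw [tinf_length, tinf_length] at hlen; omega
      · have hm3 : m < ℓ3 := by have := getElem?_some_lt_length ha; rwa [tinf_length] at this
        have hm2 : m < ℓ2 := by have := getElem?_some_lt_length hb; rwa [tinf_length] at this
        have hagf3 : ∀ t, t < m → T ((j' + t - 1) % n + 1) = T ((j + t - 1) % n + 1) := by
          intro t ht
          have := hag3 t ht
          rw [tinf_getElem? T n j' ℓ3 t (by omega), tinf_getElem? T n j ℓ2 t (by omega)] at this
          simpa using this
        have hm1 : m ≤ n - j' :=
          no_wrap hn hsent hj' hj'n hj hjn (Ne.symm hjj) hagf3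
        have hm1' : m ≤ n - j :=
          no_wrap hn hsent hj hjn hj' hj'n hjj (fun t ht => (hagf3 t ht).symm)
        rw [tinf_getElem? T n j' ℓ3 m hm3, fmod hj' (by omega)] at ha
        rw [tinf_getElem? T n j ℓ2 m hm2, fmod hj (by omega)] at hb
        rw [Option.some.injEq] at ha hb
        subst ha; subst hb
        -- hab : T (j' + m) < T (j + m)
        have hmeq : m = L := by
          obtain ⟨hm, -, -⟩ := key m (T (j' + m)) (T (j + m))
            (fun i hi => by
              rw [suff_getElem? T n j' i (by omega), suff_getElem? T n j i (by omega)]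
              exact congrArg some (by
                have := hagf3 i hi
                rwa [fmod hj' (by omega), fmod hj (by omega)] at this))
            (suff_getElem? T n j' m (by omega)) (suff_getElem? T n j m (by omega))
            (ne_of_lt hab)
          exact hm
        refine ⟨?_, ?_, by omega⟩
        · refine lt_of_mismatch m _ _ (T (j' + m)) (T (j + m)) ?_ ?_ ?_ hab
          · intro i hi
            rw [suff_getElem? T n j' i (by omega), suff_getElem? T n j i (by omega)]
            exact congrArg some (by
              have := hagf3 i hi
              rwa [fmod hj' (by omega), fmod hj (by omega)] at this)
          · exact suff_getElem? T n j' m (by omega)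
          · exact suff_getElem? T n j m (by omega)
        · -- ℓ1 ≤ L
          by_contra hc
          push_neg at hc
          have hLlt : tinf T n j' ℓ3 < tinf T n j ℓ1 := by
            refine lt_of_mismatch L _ _ (T (j' + L)) (T (j + L)) ?_ ?_ ?_ (hmeq ▸ hab)
            · intro i hi
              rw [tinf_getElem? T n j' ℓ3 i (by omega), tinf_getElem? T n j ℓ1 i (by omega)]
              exact congrArg some (hagf i hi).symm
            · rw [tinf_getElem? T n j' ℓ3 L (by omega), fmod hj' (by omega)]
            · rw [tinf_getElem? T n j ℓ1 L (by omega), fmod hj (by omega)]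
          exact absurd (lt_of_le_of_lt hle hLlt) (lt_irrefl _)
end

section
/- Let $T$ be a string of length $n$ over an ordered alphabet with maximal character $c = \max\Sigma$. For positions $j, j' \in [1..n]$ and integers $0 \le \ell_1 \le \ell_2$: $T^\infty[j'..j'+\ell_1) = T^\infty[j..j+\ell_1)$ holds if and only if $T^\infty[j..j+\ell_1) \preceq T^\infty[j'..j'+\ell_2) \prec T^\infty[j..j+\ell_1) \cdot c^\infty$, where $c^\infty$ denotes the infinite string consisting of the character $c$ repeated. -/
section helpers
variable {α : Type*} [LinearOrder α]

lemma consLeIff {a b : α} {s t : List α} :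
    (a :: s : List α) ≤ b :: t ↔ a < b ∨ (a = b ∧ s ≤ t) := by
  constructor
  · intro h
    rcases (le_iff_lt_or_eq.mp h) with h | h
    · cases (show List.Lex (·<·) (a::s) (b::t) from h) with
      | cons h' => exact Or.inr ⟨rfl, le_of_lt (show List.Lex (·<·) s t from h')⟩
      | rel h' => exact Or.inl h'
    · injection h with h1 h2
      exact Or.inr ⟨h1, h2 ▸ le_rfl⟩
  · rintro (h | ⟨rfl, h⟩)
    · exact le_of_lt (List.Lex.rel h)
    · exact List.cons_le_cons a h

lemma prefixLe : ∀ {s t : List α}, s <+: t → s ≤ t := by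
  intro s
  induction s with
  | nil => intro t _; cases t with
    | nil => exact le_rfl
    | cons b t => exact le_of_lt (show List.Lex (·<·) [] (b::t) from List.Lex.nil)
  | cons a s ih =>
    rintro t ⟨r, rfl⟩
    exact List.cons_le_cons a (ih ⟨r, rfl⟩)

lemma appendLeAppend (A : List α) {s t : List α} (h : s ≤ t) : A ++ s ≤ A ++ t := by
  induction A with
  | nil => simpa
  | cons a A ih => exact List.cons_le_cons a ih

lemma leReplicate (c : α) : ∀ (s : List α), (∀ x ∈ s, x ≤ c) → s ≤ List.replicate s.length c := by
  intro s
  induction s with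
  | nil => intro _; simp
  | cons a s ih =>
    intro h
    rw [List.length_cons, List.replicate_succ, consLeIff]
    rcases lt_or_eq_of_le (h a (by simp)) with h' | h'
    · exact Or.inl h'
    · exact Or.inr ⟨h', ih (fun x hx => h x (by simp [hx]))⟩

lemma sandwich : ∀ (A B R : List α), A.length ≤ B.length → A ≤ B → B ≤ A ++ R → A <+: B := by
  intro A
  induction A with
  | nil => intro B R _ _ _; exact List.nil_prefix
  | cons a A ih =>
    intro B R hlen h1 h2
    cases B with
    | nil => simp at hlen
    | cons b B =>
      rw [consLeIff] at h1
      rw [List.cons_append, consLeIff] at h2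
      rcases h1 with h1 | ⟨rfl, h1⟩
      · rcases h2 with h2 | ⟨rfl, _⟩
        · exact absurd h2 (not_lt_of_gt h1)
        · exact absurd h1 (lt_irrefl _)
      · rcases h2 with h2 | ⟨_, h2⟩
        · exact absurd h2 (lt_irrefl _)
        · obtain ⟨r, hr⟩ := ih B R (by simpa using hlen) h1 h2
          exact ⟨r, by rw [List.cons_append, hr]⟩

end helpers


/-- Lemma `lm:utils`(3): with `c = max Σ` and `0 ≤ ℓ1 ≤ ℓ2`:
`T^∞[j'..j'+ℓ1) = T^∞[j..j+ℓ1)` iff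
`T^∞[j..j+ℓ1) ⪯ T^∞[j'..j'+ℓ2) ≺ T^∞[j..j+ℓ1)·c^∞`.
Since the left comparand of the last inequality has length `ℓ2`, the strict comparison
against the infinite string `T^∞[j..j+ℓ1)·c^∞` is expressed by the (non-strict)
comparison against its length-`ℓ2` prefix `T^∞[j..j+ℓ1) ++ c^(ℓ2-ℓ1)`. -/
theorem window_eq_iff_between {α : Type*} [LinearOrder α] (T : ℕ → α) (n : ℕ) (hn : 1 ≤ n)
    (hsent : ∀ i, 1 ≤ i → i < n → T n < T i)
    (c : α) (hc : ∀ a : α, a ≤ c)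
    (j j' ℓ1 ℓ2 : ℕ) (hj : 1 ≤ j) (hjn : j ≤ n) (hj' : 1 ≤ j') (hj'n : j' ≤ n)
    (h12 : ℓ1 ≤ ℓ2) :
    tinf T n j' ℓ1 = tinf T n j ℓ1 ↔
      (tinf T n j ℓ1 ≤ tinf T n j' ℓ2 ∧
        tinf T n j' ℓ2 ≤ tinf T n j ℓ1 ++ List.replicate (ℓ2 - ℓ1) c) := by

  have hA : (tinf T n j ℓ1).length = ℓ1 := by simp [tinf]
  have hB : (tinf T n j' ℓ2).length = ℓ2 := by simp [tinf]
  have htake : tinf T n j' ℓ1 = (tinf T n j' ℓ2).take ℓ1 := by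
    simp [tinf, ← List.map_take, List.take_range, min_eq_left h12]
  constructor
  · intro h
    have hpre : tinf T n j ℓ1 <+: tinf T n j' ℓ2 := by
      rw [← h, htake]; exact List.take_prefix _ _
    refine ⟨prefixLe hpre, ?_⟩
    obtain ⟨r, hr⟩ := hpre
    have hrlen : r.length = ℓ2 - ℓ1 := by
      have := congrArg List.length hr
      simp [hA, hB] at this
      omega
    calc tinf T n j' ℓ2 = tinf T n j ℓ1 ++ r := hr.symm
      _ ≤ tinf T n j ℓ1 ++ List.replicate (ℓ2 - ℓ1) c := by
          apply appendLeAppend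
          have := leReplicate c r (fun x _ => hc x)
          rwa [hrlen] at this
  · rintro ⟨h1, h2⟩
    have hpre : tinf T n j ℓ1 <+: tinf T n j' ℓ2 :=
      sandwich _ _ _ (by rw [hA, hB]; exact h12) h1 h2
    rw [htake, List.prefix_iff_eq_take.mp hpre, hA]
end

section
/- Define sequences $\alpha_k, \beta_k$ by $\alpha_0 = \beta_0 = 0$; for odd $k$, $\alpha_k = \alpha_{k-1} + d_{k-1}$ and $\beta_k = \beta_{k-1} + d_{k-1}$; for even $k \ge 2$, $\alpha_k = \alpha_{k-1} + (h_{k-1}+7)d_{k-1}$ and $\beta_k = \beta_{k-1} + 4 d_{k-1}$, where $d_k = 2^{\lfloor k/2 \rfloor}$ and $(h_k)$ is any sequence of nonnegative integers that is non-decreasing. Then for every $k \ge 1$: $d_k \le \alpha_k < (2h_{k-1}+16)d_{k-1}$ and $\beta_k < 10 d_{k-1}$. -/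
/-- Fact `fct:alphabeta`: with `d k = 2^⌊k/2⌋`, a non-decreasing sequence `h` of
nonnegative integers, and `α, β` given by `α₀ = β₀ = 0`,
`α_k = α_{k-1} + d_{k-1}`, `β_k = β_{k-1} + d_{k-1}` for odd `k`, and
`α_k = α_{k-1} + (h_{k-1}+7)·d_{k-1}`, `β_k = β_{k-1} + 4·d_{k-1}` for even `k ≥ 2`,
every `k ≥ 1` satisfies `d_k ≤ α_k < (2·h_{k-1}+16)·d_{k-1}` and `β_k < 10·d_{k-1}`. -/
theorem alpha_beta_bounds (d h a b : ℕ → ℕ)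
    (hd : ∀ k, d k = 2 ^ (k / 2))
    (hmono : Monotone h)
    (ha0 : a 0 = 0) (hb0 : b 0 = 0)
    (haodd : ∀ k, 1 ≤ k → Odd k → a k = a (k - 1) + d (k - 1))
    (hbodd : ∀ k, 1 ≤ k → Odd k → b k = b (k - 1) + d (k - 1))
    (haeven : ∀ k, 1 ≤ k → Even k → a k = a (k - 1) + (h (k - 1) + 7) * d (k - 1))
    (hbeven : ∀ k, 1 ≤ k → Even k → b k = b (k - 1) + 4 * d (k - 1)) :
    ∀ k, 1 ≤ k →
      d k ≤ a k ∧ a k < (2 * h (k - 1) + 16) * d (k - 1) ∧ b k < 10 * d (k - 1) := by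
  have key : ∀ k, 1 ≤ k →
      d k ≤ a k ∧
      (Odd k → a k < (h (k - 1) + 9) * d (k - 1) ∧ b k < 6 * d (k - 1)) ∧
      (Even k → a k < (2 * h (k - 1) + 16) * d (k - 1) ∧ b k < 10 * d (k - 1)) := by
    intro k hk
    induction k, hk using Nat.le_induction with
    | base =>
      have ha1 : a 1 = 1 := by
        rw [haodd 1 le_rfl odd_one]; simp [ha0, hd]
      have hb1 : b 1 = 1 := by
        rw [hbodd 1 le_rfl odd_one]; simp [hb0, hd]
      have hd1 : d 1 = 1 := by simp [hd]
      have hd0 : d 0 = 1 := by simp [hd]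
      refine ⟨by omega, fun _ => ⟨?_, ?_⟩, fun he => absurd he (by decide)⟩ <;>
        simp [ha1, hb1, hd0] <;> omega
    | succ k hk ih =>
      obtain ⟨iha, ihodd, iheven⟩ := ih
      simp only [Nat.add_sub_cancel]
      rcases Nat.even_or_odd k with hek | hok
      · -- k even (so k ≥ 2), k+1 odd
        have hok1 : Odd (k + 1) := Even.add_one hek
        obtain ⟨m, hm⟩ := hek
        have hdk : d k = 2 * d (k - 1) := by
          rw [hd, hd]
          have e : k / 2 = (k - 1) / 2 + 1 := by omega
          rw [e, pow_succ]; ring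
        have hdk1 : d (k + 1) = d k := by rw [hd, hd]; congr 1; omega
        have ha' := haodd (k + 1) (by omega) hok1
        have hb' := hbodd (k + 1) (by omega) hok1
        simp only [Nat.add_sub_cancel] at ha' hb'
        have he := iheven ⟨m, hm⟩
        refine ⟨?_, fun _ => ⟨?_, ?_⟩, fun h1 => absurd ⟨m, hm⟩ (Nat.even_add_one.mp h1)⟩
        · rw [ha', hdk1]; omega
        · calc a (k + 1) = a k + d k := ha'
            _ < (2 * h (k - 1) + 16) * d (k - 1) + d k := Nat.add_lt_add_right he.1 _
            _ = (h (k - 1) + 9) * d k := by rw [hdk]; ring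
            _ ≤ (h k + 9) * d k := by
                exact Nat.mul_le_mul_right _
                  (by have := hmono (Nat.sub_le k 1); omega)
        · calc b (k + 1) = b k + d k := hb'
            _ < 10 * d (k - 1) + d k := Nat.add_lt_add_right he.2 _
            _ = 6 * d k := by rw [hdk]; ring
      · -- k odd, k+1 even
        have hek1 : Even (k + 1) := Nat.even_add_one.mpr (Nat.not_even_iff_odd.mpr hok)
        obtain ⟨m, hm⟩ := hok
        have hdk1 : d (k + 1) = 2 * d k := by
          rw [hd, hd]
          have e : (k + 1) / 2 = k / 2 + 1 := by omega
          rw [e, pow_succ]; ring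
        have hdkm : d (k - 1) = d k := by rw [hd, hd]; congr 1; omega
        have ha' := haeven (k + 1) (by omega) hek1
        have hb' := hbeven (k + 1) (by omega) hek1
        simp only [Nat.add_sub_cancel] at ha' hb'
        have ho := ihodd ⟨m, hm⟩
        have hmk : h (k - 1) ≤ h k := hmono (Nat.sub_le k 1)
        refine ⟨?_, fun h1 => absurd hek1 (Nat.not_even_iff_odd.mpr h1), fun _ => ⟨?_, ?_⟩⟩
        · rw [ha', hdk1]
          have h7 : 7 * d k ≤ (h k + 7) * d k := Nat.mul_le_mul_right _ (by omega)
          omega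
        · calc a (k + 1) = a k + (h k + 7) * d k := ha'
            _ < (h (k - 1) + 9) * d (k - 1) + (h k + 7) * d k :=
                Nat.add_lt_add_right ho.1 _
            _ = (h (k - 1) + 9) * d k + (h k + 7) * d k := by rw [hdkm]
            _ ≤ (h k + 9) * d k + (h k + 7) * d k :=
                Nat.add_le_add_right (Nat.mul_le_mul_right _ (by omega)) _
            _ = (2 * h k + 16) * d k := by ring
        · calc b (k + 1) = b k + 4 * d k := hb'
            _ < 6 * d (k - 1) + 4 * d k := Nat.add_lt_add_right ho.2 _
            _ = 10 * d k := by rw [hdkm]; ring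
  intro k hk
  obtain ⟨h1, h2, h3⟩ := key k hk
  rcases Nat.even_or_odd k with he | ho
  · exact ⟨h1, (h3 he).1, (h3 he).2⟩
  · refine ⟨h1, ?_, ?_⟩
    · exact lt_of_lt_of_le (h2 ho).1 (Nat.mul_le_mul_right _ (by omega))
    · exact lt_of_lt_of_le (h2 ho).2 (Nat.mul_le_mul_right _ (by omega))
end

section
/- Let $T$ be a string of length $n$ with a unique minimal sentinel at position $n$, $\tau \ge 1$, $\ell \ge 3\tau$, and $j, j' \in [1..n]$ with $j \ne j'$ and $T[j..j+\ell) = T[j'..j'+\ell)$ (both windows within $T$). Let $\S \subseteq [1..n-2\tau+1]$ satisfy the consistency condition: for all $i_1, i_2 \in [1..n-2\tau+1]$, if $T[i_1..i_1+2\tau) = T[i_2..i_2+2\tau)$ then $i_1 \in \S \Leftrightarrow i_2 \in \S$. Suppose $s \in \S \cap [j..j+\tau)$ and $s$ is minimal with this property. Then $s' := j' + (s - j)$ satisfies $s' \in \S$ and $s' = \min(\S \cap [j'..j'+\tau))$. -/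
/-- Consistency of synchronizing sets: if `T[j..j+ℓ) = T[j'..j'+ℓ)` with `ℓ ≥ 3τ`,
`Sync ⊆ [1..n-2τ+1]` satisfies the consistency condition (membership of `i` depends
only on `T[i..i+2τ)`), and `s = min(Sync ∩ [j..j+τ))`, then
`s' = j' + (s - j)` satisfies `s' ∈ Sync` and `s' = min(Sync ∩ [j'..j'+τ))`. -/
theorem sync_offset_consistent {α : Type*} [LinearOrder α] (T : ℕ → α) (n τ ℓ : ℕ)
    (hτ : 1 ≤ τ) (hℓ : 3 * τ ≤ ℓ)
    (hn : 1 ≤ n) (hsent : ∀ a, 1 ≤ a → a < n → T n < T a)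
    (j j' : ℕ) (hne : j ≠ j') (hj : 1 ≤ j) (hjl : j + ℓ ≤ n + 1)
    (hj' : 1 ≤ j') (hj'l : j' + ℓ ≤ n + 1)
    (heq : ∀ t, t < ℓ → T (j + t) = T (j' + t))
    (Sync : Set ℕ)
    (hsub : ∀ x ∈ Sync, 1 ≤ x ∧ x + 2 * τ ≤ n + 1)
    (hcons : ∀ i1 i2, 1 ≤ i1 → i1 + 2 * τ ≤ n + 1 → 1 ≤ i2 → i2 + 2 * τ ≤ n + 1 →
      (∀ t, t < 2 * τ → T (i1 + t) = T (i2 + t)) → (i1 ∈ Sync ↔ i2 ∈ Sync))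
    (s : ℕ) (hs : s ∈ Sync) (hsj : j ≤ s) (hsτ : s < j + τ)
    (hmin : ∀ x ∈ Sync, j ≤ x → x < j + τ → s ≤ x) :
    (j' + (s - j)) ∈ Sync ∧ j' ≤ j' + (s - j) ∧ j' + (s - j) < j' + τ ∧
      ∀ x ∈ Sync, j' ≤ x → x < j' + τ → j' + (s - j) ≤ x := by
  obtain ⟨hs1, hs2⟩ := hsub s hs
  set d := s - j with hd
  have hds : s = j + d := by omega
  have hdτ : d < τ := by omega
  have key : ∀ a b, j ≤ a → a < j + τ → b = j' + (a - j) → (a ∈ Sync ↔ b ∈ Sync) := by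
    intro a b ha1 ha2 hb
    apply hcons <;> try omega
    intro t ht
    have h1 := heq ((a - j) + t) (by omega)
    have : a + t = j + ((a - j) + t) := by omega
    rw [this, h1]
    congr 1
    omega
  have hmem : (j' + (s - j)) ∈ Sync := by
    rw [← key s _ hsj hsτ rfl]; exact hs
  refine ⟨hmem, by omega, by omega, ?_⟩
  intro x hx hx1 hx2
  have hy : (j + (x - j')) ∈ Sync := by
    rw [key (j + (x - j')) x (by omega) (by omega) (by omega)]; exact hx
  have := hmin _ hy (by omega) (by omega)
  omega
end

section
/- Let $d \ge \ell \ge 3\tau$ with $\tau \ge 1$, and let $T$ be a string of length $n$ with unique minimal sentinel at position $n$. Suppose $j, j' \in \mathsf{R}(\tau,T)$ with $T^\infty[j..j+d) = T^\infty[j'..j'+d)$. Let $s = \mathrm{head}(j)$, $H = \mathrm{root}(j)$ (so $\mathrm{per}(T[j..j+3\tau-2]) = |H|$ and $T[j..j+s)$ is a proper suffix of $H$ matching the offset of $j$). Then $\min(\mathrm{rend}(j') - j', d) = \min(\mathrm{rend}(j) - j, d)$, where $\mathrm{rend}(i)$ is such that $T[i..\mathrm{rend}(i))$ is the longest prefix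 of $T[i..n]$ with period $|H|$. -/
private lemma tinf_pt {α : Type*} (T : ℕ → α) (n j j' d : ℕ)
    (heq : tinf T n j d = tinf T n j' d) :
    ∀ t, t < d → T ((j + t - 1) % n + 1) = T ((j' + t - 1) % n + 1) := by
  intro t ht
  have h := congrArg (fun L => L[t]?) heq
  simp only [tinf, List.getElem?_map, List.getElem?_range, ht, if_pos] at h
  simpa using h

private lemma frag_eq_tinf {α : Type*} (T : ℕ → α) (n j len : ℕ) (hj : 1 ≤ j)
    (hlen : j + len ≤ n + 1) : frag T j len = tinf T n j len := by
  unfold frag tinf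
  apply List.map_congr_left
  intro t ht
  rw [List.mem_range] at ht
  rw [Nat.mod_eq_of_lt (by omega)]
  congr 1
  omega

private lemma tinf_eq_take {α : Type*} (T : ℕ → α) (n j l d : ℕ) (h : l ≤ d) :
    tinf T n j l = (tinf T n j d).take l := by
  unfold tinf
  rw [← List.map_take, List.take_range, Nat.min_eq_left h]

private lemma aux_le {α : Type*} [LinearOrder α] (T : ℕ → α) (n τ d : ℕ)
    (hτ : 1 ≤ τ) (hd : 3 * τ ≤ d)
    (hn : 1 ≤ n) (hsent : ∀ i, 1 ≤ i → i < n → T n < T i)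
    (j j' : ℕ) (hj : 1 ≤ j) (hjn : j + 3 * τ ≤ n + 2)
    (hj' : 1 ≤ j') (hj'n : j' + 3 * τ ≤ n + 2)
    (heq : tinf T n j d = tinf T n j' d) :
    min (runEnd T n j (per (frag T j (3 * τ - 1))) - j) d ≤
      min (runEnd T n j' (per (frag T j' (3 * τ - 1))) - j') d := by
  have hpt : ∀ t, t < d → T ((j + t - 1) % n + 1) = T ((j' + t - 1) % n + 1) :=
    tinf_pt T n j j' d heq
  have hmod : ∀ a, 1 ≤ a → a ≤ n → (a - 1) % n + 1 = a := by
    intro a h1 h2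
    rw [Nat.mod_eq_of_lt (by omega)]; omega
  have hfrag : frag T j (3 * τ - 1) = frag T j' (3 * τ - 1) := by
    rw [frag_eq_tinf T n j _ hj (by omega), frag_eq_tinf T n j' _ hj' (by omega),
        tinf_eq_take T n j (3 * τ - 1) d (by omega),
        tinf_eq_take T n j' (3 * τ - 1) d (by omega), heq]
  rw [← hfrag]
  set p := per (frag T j (3 * τ - 1)) with hp
  set e := runEnd T n j p with he
  have hmem : e ∈ {e | j ≤ e ∧ e ≤ n + 1 ∧ ∀ t, j ≤ t → t + p < e → T t = T (t + p)} := by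
    rw [he, runEnd]
    exact Nat.sSup_mem ⟨j, le_refl j, by omega, fun t ht htp => absurd htp (by omega)⟩
      ⟨n + 1, fun x hx => hx.2.1⟩
  obtain ⟨hje, hen, hper⟩ := hmem
  set m := min (e - j) d with hm
  have hmd : m ≤ d := min_le_right _ _
  have hme : m ≤ e - j := min_le_left _ _
  have hA : j' + m ≤ n + 1 := by
    by_contra hc
    push_neg at hc
    have ht0 : n - j' < m := by omega
    have h1 := hpt (n - j') (lt_of_lt_of_le ht0 hmd)
    have hjt : j + (n - j') ≤ n := by omega
    rw [hmod (j + (n - j')) (by omega) hjt,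
        hmod (j' + (n - j')) (by omega) (by omega)] at h1
    have hjn' : j' + (n - j') = n := by omega
    rw [hjn'] at h1
    rcases lt_or_eq_of_le hjt with hlt | heqn
    · exact absurd h1.symm (ne_of_lt (hsent _ (by omega) hlt))
    · omega
  have hB : ∀ t, j' ≤ t → t + p < j' + m → T t = T (t + p) := by
    intro t ht htp
    obtain ⟨s, rfl⟩ : ∃ s, t = j' + s := ⟨t - j', by omega⟩
    have hs : s + p < m := by omega
    have h1 := hpt s (by omega)
    have h2 := hpt (s + p) (by omega)
    have hjs : j + s < e := by omega
    have hjsp : j + (s + p) < e := by omega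
    rw [hmod (j + s) (by omega) (by omega), hmod (j' + s) (by omega) (by omega)] at h1
    rw [hmod (j + (s + p)) (by omega) (by omega),
        hmod (j' + (s + p)) (by omega) (by omega)] at h2
    have h3 := hper (j + s) (by omega) (by omega)
    rw [show j' + s + p = j' + (s + p) from by omega, ← h2,
        show j + (s + p) = j + s + p from by omega, ← h3, h1]
  have hsub : j' + m ≤ runEnd T n j' p := by
    rw [runEnd]
    exact le_csSup ⟨n + 1, fun x hx => hx.2.1⟩ ⟨by omega, hA, hB⟩
  exact le_min (by omega) hmd

/-- Lemma `lm:occ-exp`(2), key step: if `j, j' ∈ R(τ,T)` and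
`T^∞[j..j+d) = T^∞[j'..j'+d)` with `d ≥ ℓ ≥ 3τ`, then
`min(rend(j') - j', d) = min(rend(j) - j, d)`, where for `i ∈ R(τ,T)`,
`T[i..rend(i))` is the longest prefix of `T[i..n]` whose period is the shortest
period of `T[i..i+3τ-2]`. -/
theorem rend_min_eq_of_window_eq {α : Type*} [LinearOrder α] (T : ℕ → α) (n τ ℓ d : ℕ)
    (hτ : 1 ≤ τ) (hℓ : 3 * τ ≤ ℓ) (hd : ℓ ≤ d)
    (hn : 1 ≤ n) (hsent : ∀ i, 1 ≤ i → i < n → T n < T i)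
    (j j' : ℕ) (hj : 1 ≤ j) (hjn : j + 3 * τ ≤ n + 2)
    (hj' : 1 ≤ j') (hj'n : j' + 3 * τ ≤ n + 2)
    (hperj : 3 * per (frag T j (3 * τ - 1)) ≤ τ)
    (hperj' : 3 * per (frag T j' (3 * τ - 1)) ≤ τ)
    (heq : tinf T n j d = tinf T n j' d) :
    min (runEnd T n j' (per (frag T j' (3 * τ - 1))) - j') d =
      min (runEnd T n j (per (frag T j (3 * τ - 1))) - j) d :=
  le_antisymm
    (aux_le T n τ d hτ (le_trans hℓ hd) hn hsent j' j hj' hj'n hj hjn heq.symm)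
    (aux_le T n τ d hτ (le_trans hℓ hd) hn hsent j j' hj hjn hj' hj'n heq)
end

section
/- Let $S$ be a string, $\tau \ge 1$, $H$ a primitive string with $|H| \le \tau/3$, and let $j, j' \in [1..|S|]$ be positions such that both $S[j..j+3\tau-2]$ and $S[j'..j'+3\tau-2]$ have shortest period $|H|$, and suffixes $H' H^2$ and $\widehat{H}' H^2$ are prefixes of $S[j..j+3\tau-1)$ and $S[j'..j'+3\tau-1)$ respectively, where $H'$, $\widehat{H}'$ are proper suffixes of $H$ of lengths $s$, $s'$. If $\mathrm{LCE}_S(j,j') \ge 3\tau - 1$, then $s = s'$ (the head offsets coincide), by the synchronization property of primitive strings. -/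
/-- A list is primitive if it is not a power `U^m` of a shorter list with `m ≥ 2`. -/
def PrimitiveList {α : Type*} (H : List α) : Prop :=
  ¬ ∃ (U : List α) (m : ℕ), 2 ≤ m ∧ H = (List.replicate m U).flatten

lemma comm_append_aux {α : Type*} : ∀ (n : ℕ) (A B : List α), A.length + B.length ≤ n →
    A ++ B = B ++ A →
    ∃ (C : List α) (k l : ℕ), A = (List.replicate k C).flatten ∧
      B = (List.replicate l C).flatten := by
  intro n
  induction n with
  | zero =>
    intro A B hn _
    have hA : A = [] := List.length_eq_zero_iff.mp (by omega)
    have hB : B = [] := List.length_eq_zero_iff.mp (by omega)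
    exact ⟨[], 0, 0, by simp [hA], by simp [hB]⟩
  | succ n ih =>
    intro A B hn h
    by_cases hA : A = []
    · exact ⟨B, 0, 1, by simp [hA], by simp⟩
    by_cases hB : B = []
    · exact ⟨A, 1, 0, by simp, by simp [hB]⟩
    have hApos : 0 < A.length := List.length_pos_iff.mpr hA
    have hBpos : 0 < B.length := List.length_pos_iff.mpr hB
    rcases le_total A.length B.length with hle | hle
    · have h1 : (A ++ B).take A.length = A := by simp
      have htake : A = B.take A.length := by
        conv_lhs => rw [← h1, h]
        exact List.take_append_of_le_length hle
      have hBA : B = A ++ B.drop A.length := by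
        conv_lhs => rw [← List.take_append_drop A.length B]
        rw [← htake]
      have h2 : A ++ (A ++ B.drop A.length) = A ++ (B.drop A.length ++ A) := by
        calc A ++ (A ++ B.drop A.length) = A ++ B := by rw [← hBA]
          _ = B ++ A := h
          _ = (A ++ B.drop A.length) ++ A := by rw [← hBA]
          _ = A ++ (B.drop A.length ++ A) := by rw [List.append_assoc]
      have h' := List.append_cancel_left h2
      have hlen : A.length + (B.drop A.length).length ≤ n := by
        simp only [List.length_drop]; omega
      obtain ⟨C, k, l, hAC, hDC⟩ := ih A _ hlen h'
      refine ⟨C, k, k + l, hAC, ?_⟩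
      rw [List.replicate_add, List.flatten_append, ← hAC, ← hDC, ← hBA]
    · have h1 : (B ++ A).take B.length = B := by simp
      have htake : B = A.take B.length := by
        conv_lhs => rw [← h1, ← h]
        exact List.take_append_of_le_length hle
      have hAB : A = B ++ A.drop B.length := by
        conv_lhs => rw [← List.take_append_drop B.length A]
        rw [← htake]
      have h2 : B ++ (B ++ A.drop B.length) = B ++ (A.drop B.length ++ B) := by
        calc B ++ (B ++ A.drop B.length) = B ++ A := by rw [← hAB]
          _ = A ++ B := h.symm
          _ = (B ++ A.drop B.length) ++ B := by rw [← hAB]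
          _ = B ++ (A.drop B.length ++ B) := by rw [List.append_assoc]
      have h' := List.append_cancel_left h2
      have hlen : B.length + (A.drop B.length).length ≤ n := by
        simp only [List.length_drop]; omega
      obtain ⟨C, k, l, hBC, hDC⟩ := ih B _ hlen h'
      refine ⟨C, k + l, k, ?_, hBC⟩
      rw [List.replicate_add, List.flatten_append, ← hBC, ← hDC, ← hAB]

lemma flatten_replicate_nonempty {α : Type*} {A C : List α} {k : ℕ}
    (hA : A ≠ []) (h : A = (List.replicate k C).flatten) : 1 ≤ k ∧ C ≠ [] := by
  constructor
  · rcases k with _ | k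
    · simp at h; exact absurd h hA
    · omega
  · rintro rfl
    simp at h
    exact hA h

lemma primitive_no_rotate {α : Type*} {H : List α} (hprim : PrimitiveList H)
    {d : ℕ} (hd : 0 < d) (hdp : d < H.length) (h : H = H.drop d ++ H.take d) : False := by
  set A := H.take d with hA
  set B := H.drop d with hB
  have hAB : A ++ B = H := List.take_append_drop d H
  have hcomm : A ++ B = B ++ A := by rw [hAB, ← h]
  obtain ⟨C, k, l, hAC, hBC⟩ :=
    comm_append_aux (A.length + B.length) A B le_rfl hcomm
  have hAne : A ≠ [] := List.length_pos_iff.mp (by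
    rw [hA, List.length_take]; omega)
  have hBne : B ≠ [] := List.length_pos_iff.mp (by
    rw [hB, List.length_drop]; omega)
  obtain ⟨hk, hCne⟩ := flatten_replicate_nonempty hAne hAC
  obtain ⟨hl, -⟩ := flatten_replicate_nonempty hBne hBC
  apply hprim
  refine ⟨C, k + l, by omega, ?_⟩
  rw [List.replicate_add, List.flatten_append, ← hAC, ← hBC, hAB]

lemma lcpLen_take {α : Type*} [DecidableEq α] :
    ∀ (L1 L2 : List α) (m : ℕ), m ≤ lcpLen L1 L2 → L1.take m = L2.take m := by
  intro L1
  induction L1 with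
  | nil => intro L2 m h; cases L2 <;> simp [lcpLen] at h <;> simp [h]
  | cons a s ihs =>
    intro L2 m h
    cases L2 with
    | nil => simp [lcpLen] at h; simp [h]
    | cons b t =>
      rcases m with _ | m
      · simp
      · by_cases hab : a = b
        · subst hab
          have hl : lcpLen (a :: s) (a :: t) = lcpLen s t + 1 := by
            unfold lcpLen; rw [if_pos rfl]
            cases s <;> cases t <;> rfl
          rw [hl] at h
          simp [List.take_succ_cons, ihs t m (by omega)]
        · have hl : lcpLen (a :: s) (b :: t) = 0 := by
            unfold lcpLen; rw [if_neg hab]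
          rw [hl] at h
          omega

lemma offsets_eq_of_prefixes {α : Type*} {H X : List α} {p s s' : ℕ}
    (hp : p = H.length) (hprim : PrimitiveList H)
    (hs : s < p) (hs' : s' < p) (hle : s ≤ s')
    (hpre : (H.drop (p - s) ++ H ++ H) <+: X)
    (hpre' : (H.drop (p - s') ++ H ++ H) <+: X) : s = s' := by
  by_contra hne
  set d := s' - s with hd
  have hd0 : 0 < d := by omega
  have hdp : d < p := by omega
  obtain ⟨R, hR⟩ := hpre
  obtain ⟨R', hR'⟩ := hpre'
  have hlen : (H.drop (p - s)).length = s := by simp only [List.length_drop]; omega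
  have hlen' : (H.drop (p - s')).length = s' := by simp only [List.length_drop]; omega
  have hR2 : X = H.drop (p - s) ++ (H ++ (H ++ R)) := by
    rw [← hR]; simp [List.append_assoc]
  have hR2' : X = H.drop (p - s') ++ (H ++ (H ++ R')) := by
    rw [← hR']; simp [List.append_assoc]
  have hXs : X.drop s = H ++ (H ++ R) := by
    rw [hR2, List.drop_append, List.drop_eq_nil_of_le hlen.le, hlen,
      Nat.sub_self, List.drop_zero, List.nil_append]
  have hXs' : X.drop s' = H ++ (H ++ R') := by
    rw [hR2', List.drop_append, List.drop_eq_nil_of_le hlen'.le, hlen',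
      Nat.sub_self, List.drop_zero, List.nil_append]
  have hdrop : H ++ (H ++ R') = (H ++ (H ++ R)).drop d := by
    rw [← hXs, ← hXs', List.drop_drop]
    congr 1
    omega
  have hdropped : H ++ (H ++ R') = H.drop d ++ (H ++ R) := by
    rw [hdrop, List.drop_append]
    congr 1
    rw [show d - H.length = 0 by omega]
    simp
  have h1 : (H ++ (H ++ R')).take p = H := by
    rw [List.take_append_of_le_length (by omega), hp, List.take_length]
  have h2 : (H.drop d ++ (H ++ R)).take p = H.drop d ++ H.take d := by
    rw [List.take_append]
    congr 1
    · exact List.take_of_length_le (by simp only [List.length_drop]; omega)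
    · rw [show p - (H.drop d).length = d by simp only [List.length_drop]; omega]
      exact List.take_append_of_le_length (by omega)
  have hkey : H = H.drop d ++ H.take d := by
    conv_lhs => rw [← h1, hdropped, h2]
  exact primitive_no_rotate hprim hd0 (by omega) hkey

/-- Head offsets coincide: if `H` is primitive with `|H| = p ≤ τ/3`, both
`S[j..j+3τ-2]` and `S[j'..j'+3τ-2]` have shortest period `p`, the strings `H'H²` and
`Ĥ'H²` (with `H'`, `Ĥ'` proper suffixes of `H` of lengths `s`, `s'`) are prefixes of
`S[j..j+3τ-1)` and `S[j'..j'+3τ-1)` respectively, and `LCE_S(j,j') ≥ 3τ-1`, then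
`s = s'`. -/
theorem head_offsets_coincide {α : Type*} [LinearOrder α] (S : ℕ → α) (k τ : ℕ)
    (hτ : 1 ≤ τ) (H : List α) (p s s' : ℕ)
    (hp : p = H.length) (hppos : 1 ≤ p) (hpτ : 3 * p ≤ τ) (hprim : PrimitiveList H)
    (j j' : ℕ) (hj : 1 ≤ j) (hjk : j + 3 * τ ≤ k + 2)
    (hj' : 1 ≤ j') (hj'k : j' + 3 * τ ≤ k + 2)
    (hperj : per (frag S j (3 * τ - 1)) = p)
    (hperj' : per (frag S j' (3 * τ - 1)) = p)
    (hs : s < p) (hs' : s' < p)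
    (hpre : (H.drop (p - s) ++ H ++ H) <+: frag S j (3 * τ - 1))
    (hpre' : (H.drop (p - s') ++ H ++ H) <+: frag S j' (3 * τ - 1))
    (hlce : 3 * τ - 1 ≤ lcpLen (suff S k j) (suff S k j')) :
    s = s' := by
  have h1 := lcpLen_take (suff S k j) (suff S k j') (3 * τ - 1) hlce
  have e1 : (suff S k j).take (3 * τ - 1) = frag S j (3 * τ - 1) := by
    unfold suff frag
    rw [← List.map_take, List.take_range, min_eq_left (by omega)]
  have e2 : (suff S k j').take (3 * τ - 1) = frag S j' (3 * τ - 1) := by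
    unfold suff frag
    rw [← List.map_take, List.take_range, min_eq_left (by omega)]
  rw [e1, e2] at h1
  rw [← h1] at hpre'
  rcases le_total s s' with h | h
  · exact offsets_eq_of_prefixes hp hprim hs hs' h hpre hpre'
  · exact (offsets_eq_of_prefixes hp hprim hs' hs h hpre' hpre).symm
end

section
/- Let $T$ be a string of length $n$ with unique minimal sentinel, $\tau \ge 1$, and let $j \in \mathsf{R}(\tau,T)$ have head $s$, root $H$ (with $p = |H| \le \tau/3$), and run end $\mathrm{rend}(j)$. Let $d \ge 3\tau$. If $\mathrm{rend}(j) - j \ge d$, then for every position $j' \in \mathsf{R}(\tau,T)$ with the same head $s$ and root $H$ and with exponent $\mathrm{exp}(j') > \lfloor (d-s)/p \rfloor$, it holds $T^\infty[j'..j'+d) = T^\infty[j..j+d)$, where $\mathrm{exp}(i) = \lfloor (\mathrm{rend}(i) - i - s)/p \rfloor$. -/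
lemma per_mul' {α : Type*} (S : ℕ → α) (a e p : ℕ)
    (h : ∀ t, a ≤ t → t + p < e → S t = S (t + p)) :
    ∀ k u, a ≤ u → u + k * p < e → S u = S (u + k * p) := by
  intro k
  induction k with
  | zero => simp
  | succ k ih =>
    intro u hu hlt
    rw [Nat.succ_mul, ← Nat.add_assoc] at hlt ⊢
    have h1 := ih u hu (by omega)
    rw [h1]
    exact h (u + k * p) (by omega) hlt

lemma tinf_eq_frag {α : Type*} (T : ℕ → α) (n a ℓ : ℕ) (ha : 1 ≤ a) (h : a + ℓ ≤ n + 1) :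
    tinf T n a ℓ = frag T a ℓ := by
  unfold tinf frag
  apply List.map_congr_left
  intro t ht
  rw [List.mem_range] at ht
  congr 1
  rw [Nat.mod_eq_of_lt (by omega)]
  omega

lemma runEnd_mem {α : Type*} (S : ℕ → α) (n i p : ℕ) (hi : i ≤ n + 1) :
    i ≤ runEnd S n i p ∧ runEnd S n i p ≤ n + 1 ∧
      ∀ t, i ≤ t → t + p < runEnd S n i p → S t = S (t + p) := by
  have : runEnd S n i p ∈
      {e | i ≤ e ∧ e ≤ n + 1 ∧ ∀ t, i ≤ t → t + p < e → S t = S (t + p)} := by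
    apply Nat.sSup_mem
    · exact ⟨i, le_rfl, hi, fun t ht hlt => absurd hlt (by omega)⟩
    · exact ⟨n + 1, fun e he => he.2.1⟩
  exact this

/-- Representative lemma: within a periodic window, every position equals the
position `a + s + m` where `m` is the phase representative in `[0, p)`. -/
lemma per_rep {α : Type*} (S : ℕ → α) (a e p s d : ℕ)
    (hper : ∀ t, a ≤ t → t + p < e → S t = S (t + p))
    (hp : 1 ≤ p) (hsp : s < p) (hde : a + d ≤ e) (hpd : 2 * p ≤ d)
    (t : ℕ) (ht : t < d) :
    S (a + t) = S (a + s + (if s ≤ t then (t - s) % p else t + p - s)) := by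
  split_ifs with hst
  · have hmad : a + s + (t - s) % p + ((t - s) / p) * p = a + t := by
      have := Nat.mod_add_div (t - s) p
      calc a + s + (t - s) % p + ((t - s) / p) * p
          = a + s + ((t - s) % p + p * ((t - s) / p)) := by ring
        _ = a + s + (t - s) := by rw [this]
        _ = a + t := by omega
    have := per_mul' S a e p hper ((t - s) / p) (a + s + (t - s) % p)
      (by omega) (by rw [hmad]; omega)
    rw [this, hmad]
  · have h1 : a + s + (t + p - s) = a + t + p := by omega
    rw [h1]
    exact hper (a + t) (by omega) (by omega)

/-- Lemma `lm:occ-gt`, converse inclusion: suppose `j ∈ R(τ,T)` has head `s`, root `H`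
(`p = |H| = per(T[j..j+3τ-2]) ≤ τ/3`, `T[j+s..j+s+p) = H`), run end `rend(j)`, and
`d ≥ 3τ`.  If `rend(j) - j ≥ d`, then every `j' ∈ R(τ,T)` with the same head `s` and
root `H` whose exponent `exp(j') = ⌊(rend(j') - j' - s)/p⌋` exceeds `⌊(d-s)/p⌋`
satisfies `T^∞[j'..j'+d) = T^∞[j..j+d)`. -/
theorem large_exponent_occurrence {α : Type*} [LinearOrder α] (T : ℕ → α) (n τ d : ℕ)
    (hτ : 1 ≤ τ) (hd : 3 * τ ≤ d)
    (hn : 1 ≤ n) (hsent : ∀ i, 1 ≤ i → i < n → T n < T i)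
    (H : List α) (p s : ℕ) (hp : p = H.length) (hppos : 1 ≤ p) (hpτ : 3 * p ≤ τ)
    (hs : s < p)
    (j : ℕ) (hj : 1 ≤ j) (hjn : j + 3 * τ ≤ n + 2)
    (hperj : per (frag T j (3 * τ - 1)) = p)
    (hrootj : frag T (j + s) p = H)
    (hrend : d ≤ runEnd T n j p - j) :
    ∀ j', 1 ≤ j' → j' + 3 * τ ≤ n + 2 →
      per (frag T j' (3 * τ - 1)) = p →
      frag T (j' + s) p = H →
      (d - s) / p < (runEnd T n j' p - j' - s) / p →
      tinf T n j' d = tinf T n j d := by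
  intro j' hj' hj'n hperj' hrootj' hexp
  obtain ⟨hjE, hEn, hEper⟩ := runEnd_mem T n j p (by omega)
  obtain ⟨hj'E, hE'n, hE'per⟩ := runEnd_mem T n j' p (by omega)
  generalize hEg : runEnd T n j p = E at hrend hjE hEn hEper
  generalize hE'g : runEnd T n j' p = E' at hexp hj'E hE'n hE'per
  have hsd : s ≤ d := by omega
  have hjdE : j + d ≤ E := by omega
  -- from the exponent hypothesis, E' - j' > d
  have h1 : ((d - s) / p + 1) * p ≤ E' - j' - s :=
    (Nat.le_div_iff_mul_le hppos).mp hexp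
  have h2 : d - s < ((d - s) / p + 1) * p := by
    have hm := Nat.mod_lt (d - s) hppos
    have hdm := Nat.div_add_mod (d - s) p
    calc d - s < p * ((d - s) / p) + p := by omega
      _ = ((d - s) / p + 1) * p := by ring
  have h3 : d - s < E' - j' - s := lt_of_lt_of_le h2 h1
  have hj'dE : j' + d < E' := by omega
  -- rewrite tinf as frag
  rw [tinf_eq_frag T n j' d hj' (by omega), tinf_eq_frag T n j d hj (by omega)]
  unfold frag
  apply List.map_congr_left
  intro t ht
  rw [List.mem_range] at ht
  have hpd : 2 * p ≤ d := by omega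
  have hrepj := per_rep T j E p s d hEper hppos hs hjdE hpd t ht
  have hrepj' := per_rep T j' E' p s d hE'per hppos hs (by omega) hpd t ht
  rw [hrepj, hrepj']
  -- same root: T (j' + s + m) = T (j + s + m) for m < p
  set m := if s ≤ t then (t - s) % p else t + p - s with hm
  have hmp : m < p := by
    rw [hm]
    split_ifs with hst
    · exact Nat.mod_lt _ hppos
    · omega
  have hfrageq : frag T (j' + s) p = frag T (j + s) p := hrootj'.trans hrootj.symm
  have := congrArg (fun L => L[m]?) hfrageq
  simp only [frag, List.getElem?_map, List.getElem?_range, hmp, if_pos,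
    Option.map_some] at this
  exact Option.some.inj this
end
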